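/- arXiv:1111.4600 — 2 statements merged into one kernel-verified Lean document; each statement's English description precedes it below -/
import Mathlib

section
/- Let G be a nontrivial strongly connected directed graph with N nodes and girth g. For every node i of G, there exists a finite set A of lengths of nonempty closed paths starting at i such that gcd(A) = c(G), A contains the length of every elementary closed path starting at i, and every element n of A satisfies g ≤ n ≤ 2N − 1. -/
namespace Transients

variable {V : Type*}

/-- A walk of length `n` in the graph with edge relation `E`, given by its node
sequence `p 0, p 1, …, p n`. -/
def IsWalk (E : V → V → Prop) (n : ℕ) (p : ℕ → V) : Prop :=
  ∀ k, k < n → E (p k) (p (k + 1))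

/-- A closed walk: start node equals end node. -/
def IsClosedWalk (E : V → V → Prop) (n : ℕ) (p : ℕ → V) : Prop :=
  IsWalk E n p ∧ p 0 = p n

/-- A nonempty elementary closed walk: closed, and no node repeats except start = end. -/
def IsElemClosedWalk (E : V → V → Prop) (n : ℕ) (p : ℕ → V) : Prop :=
  0 < n ∧ IsClosedWalk E n p ∧ ∀ k l, k < n → l < n → p k = p l → k = l

/-- A simple walk: no node is visited twice. -/
def IsSimpleWalk (E : V → V → Prop) (n : ℕ) (p : ℕ → V) : Prop :=
  IsWalk E n p ∧ ∀ k l, k ≤ n → l ≤ n → p k = p l → k = l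

def StronglyConnected (E : V → V → Prop) : Prop :=
  ∀ i j : V, ∃ n p, IsWalk E n p ∧ p 0 = i ∧ p n = j

def NontrivialGraph (E : V → V → Prop) : Prop := ∃ i j, E i j

/-- The weight `w_*` of a walk in an edge-weighted graph. -/
noncomputable def walkWeight (w : V → V → ℝ) (n : ℕ) (p : ℕ → V) : ℝ :=
  ∑ k ∈ Finset.range n, w (p k) (p (k + 1))

/-- The rate ρ(G): supremum of `w_*(γ)/ℓ(γ)` over nonempty closed walks γ. -/
noncomputable def rate (E : V → V → Prop) (w : V → V → ℝ) : ℝ :=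
  sSup {x : ℝ | ∃ n p, 0 < n ∧ IsClosedWalk E n p ∧ x = walkWeight w n p / n}

/-- A critical closed walk: nonempty, closed, and its weight is ρ(G) times its length. -/
def IsCriticalWalk (E : V → V → Prop) (w : V → V → ℝ) (n : ℕ) (p : ℕ → V) : Prop :=
  0 < n ∧ IsClosedWalk E n p ∧ walkWeight w n p = rate E w * n

/-- A critical node: lies on some critical closed walk. -/
def CriticalNode (E : V → V → Prop) (w : V → V → ℝ) (i : V) : Prop :=
  ∃ n p k, IsCriticalWalk E w n p ∧ k ≤ n ∧ p k = i

/-- A critical edge: lies on some critical closed walk. -/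
def CriticalEdge (E : V → V → Prop) (w : V → V → ℝ) (i j : V) : Prop :=
  ∃ n p k, IsCriticalWalk E w n p ∧ k < n ∧ p k = i ∧ p (k + 1) = j

/-- The non-critical rate ρ_nc(G): supremum of mean weights of nonempty closed walks
containing no critical node. -/
noncomputable def ncRate (E : V → V → Prop) (w : V → V → ℝ) : ℝ :=
  sSup {x : ℝ | ∃ n p, 0 < n ∧ IsClosedWalk E n p ∧
    (∀ k, k ≤ n → ¬ CriticalNode E w (p k)) ∧ x = walkWeight w n p / n}

/-- Δ(G), the maximum edge weight. -/
noncomputable def maxWeight (E : V → V → Prop) (w : V → V → ℝ) : ℝ :=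
  sSup {x : ℝ | ∃ i j, E i j ∧ x = w i j}

/-- δ(G), the minimum edge weight. -/
noncomputable def minWeight (E : V → V → Prop) (w : V → V → ℝ) : ℝ :=
  sInf {x : ℝ | ∃ i j, E i j ∧ x = w i j}

open Classical in
/-- Δ_nc(G), the maximum weight of an edge joining two non-critical nodes
(ρ(G) if there is no such edge). -/
noncomputable def maxNcWeight (E : V → V → Prop) (w : V → V → ℝ) : ℝ :=
  if (∃ i j, E i j ∧ ¬ CriticalNode E w i ∧ ¬ CriticalNode E w j) then
    sSup {x : ℝ | ∃ i j, E i j ∧ ¬ CriticalNode E w i ∧ ¬ CriticalNode E w j ∧ x = w i j}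
  else rate E w

/-- `d` is the greatest common divisor of the set `S` of naturals. -/
def IsGcdOf (d : ℕ) (S : Set ℕ) : Prop :=
  (∀ s ∈ S, d ∣ s) ∧ ∀ e : ℕ, (∀ s ∈ S, e ∣ s) → e ∣ d

/-- The set of lengths of nonempty closed walks in the graph. -/
def ClosedLengths (E : V → V → Prop) : Set ℕ :=
  {n | 0 < n ∧ ∃ p, IsClosedWalk E n p}

/-- The set of lengths of nonempty closed walks starting at `i`. -/
def ClosedLengthsAt (E : V → V → Prop) (i : V) : Set ℕ :=
  {n | 0 < n ∧ ∃ p, IsWalk E n p ∧ p 0 = i ∧ p n = i}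

/-- There is a (possibly empty) closed walk of length `n` starting at `i`. -/
def HasClosedWalkAt (E : V → V → Prop) (i : V) (n : ℕ) : Prop :=
  ∃ p, IsWalk E n p ∧ p 0 = i ∧ p n = i

/-- cd(G), the cab driver's diameter: the maximum length of simple walks. -/
noncomputable def cabDiameter (E : V → V → Prop) : ℕ :=
  sSup {n | ∃ p, IsSimpleWalk E n p}

/-- cr(G), the circumference: the maximum length of nonempty elementary closed walks. -/
noncomputable def circumference (E : V → V → Prop) : ℕ :=
  sSup {n | ∃ p, IsElemClosedWalk E n p}

/-- `g` is the girth of the graph: the minimum length of nonempty elementary closed walks. -/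
def IsGirth (E : V → V → Prop) (g : ℕ) : Prop :=
  IsLeast {n | ∃ p, IsElemClosedWalk E n p} g

/-- `ep` is the exploration penalty of a graph of cyclicity `c`: the least `m` such that
for every node `i` and every multiple `n` of `c` with `n ≥ m` there is a closed walk
of length `n` starting at `i`. -/
def IsEp (E : V → V → Prop) (c ep : ℕ) : Prop :=
  IsLeast {m | ∀ i : V, ∀ n : ℕ, c ∣ n → m ≤ n → HasClosedWalkAt E i n} ep

/-- `i` and `j` lie in the same strongly connected component of the graph. -/
def SameComp (E : V → V → Prop) (i j : V) : Prop :=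
  (∃ n p, IsWalk E n p ∧ p 0 = i ∧ p n = j) ∧ (∃ n p, IsWalk E n p ∧ p 0 = j ∧ p n = i)

/-- `m` is the exploration penalty of the strongly connected component of `k`
(a component of cyclicity `c`). -/
def IsCompEp (E : V → V → Prop) (k : V) (c m : ℕ) : Prop :=
  IsLeast {m' | ∀ i : V, SameComp E k i → ∀ n : ℕ, c ∣ n → m' ≤ n → HasClosedWalkAt E i n} m

/-- Max-plus matrix product. -/
noncomputable def mpMul {N : ℕ} (A B : Matrix (Fin N) (Fin N) (WithBot ℝ)) :
    Matrix (Fin N) (Fin N) (WithBot ℝ) :=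
  fun i j => Finset.univ.sup fun k => A i k + B k j

/-- Max-plus matrix power, `A^{⊗n}`. -/
noncomputable def mpPow {N : ℕ} (A : Matrix (Fin N) (Fin N) (WithBot ℝ)) :
    ℕ → Matrix (Fin N) (Fin N) (WithBot ℝ)
  | 0 => fun i j => if i = j then (0 : WithBot ℝ) else ⊥
  | n + 1 => mpMul A (mpPow A n)

/-- Max-plus matrix-vector product. -/
noncomputable def mpVec {N : ℕ} (A : Matrix (Fin N) (Fin N) (WithBot ℝ))
    (v : Fin N → WithBot ℝ) : Fin N → WithBot ℝ :=
  fun i => Finset.univ.sup fun j => A i j + v j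

/-- The edge relation of the weighted graph `G(A)`. -/
def mEdge {N : ℕ} (A : Matrix (Fin N) (Fin N) (WithBot ℝ)) : Fin N → Fin N → Prop :=
  fun i j => A i j ≠ ⊥

/-- The edge weights of the weighted graph `G(A)`. -/
noncomputable def mWeight {N : ℕ} (A : Matrix (Fin N) (Fin N) (WithBot ℝ)) :
    Fin N → Fin N → ℝ :=
  fun i j => WithBot.unbotD 0 (A i j)

/-- `A` is irreducible: `G(A)` is strongly connected and has at least one edge. -/
def MPIrreducible {N : ℕ} (A : Matrix (Fin N) (Fin N) (WithBot ℝ)) : Prop :=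
  StronglyConnected (mEdge A) ∧ NontrivialGraph (mEdge A)

/-- The linear max-plus system `x(n) = A^{⊗n} ⊗ v`. -/
noncomputable def mpSystem {N : ℕ} (A : Matrix (Fin N) (Fin N) (WithBot ℝ)) (v : Fin N → ℝ)
    (n : ℕ) : Fin N → WithBot ℝ :=
  mpVec (mpPow A n) fun j => (v j : WithBot ℝ)

/-- The set of indices from which the system `x_{A,v}` is periodic with increment
`p·ρ(A)`; its least element is the transient `n_{A,v}`. -/
noncomputable def SysTransientSet {N : ℕ} (A : Matrix (Fin N) (Fin N) (WithBot ℝ))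
    (v : Fin N → ℝ) : Set ℕ :=
  {n₀ | ∃ p : ℕ, 0 < p ∧ ∀ n, n₀ ≤ n → ∀ i,
    mpSystem A v (n + p) i
      = mpSystem A v n i + ((p * rate (mEdge A) (mWeight A) : ℝ) : WithBot ℝ)}

/-- The set of indices from which the powers of `A` are periodic with increment
`p·ρ(A)`; its least element is the transient `n_A`. -/
noncomputable def MatTransientSet {N : ℕ} (A : Matrix (Fin N) (Fin N) (WithBot ℝ)) : Set ℕ :=
  {n₀ | ∃ p : ℕ, 0 < p ∧ ∀ n, n₀ ≤ n → ∀ i j,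
    mpPow A (n + p) i j
      = mpPow A n i j + ((p * rate (mEdge A) (mWeight A) : ℝ) : WithBot ℝ)}

/-- `‖v‖ = max_i v_i − min_i v_i`. -/
noncomputable def vnorm {N : ℕ} (v : Fin N → ℝ) : ℝ :=
  sSup (Set.range v) - sInf (Set.range v)

/-!
A closed walk splits at a repeated node into two shorter closed walks, so every closed-walk
length is a sum of elementary cycle lengths. Take for `A` all closed-walk lengths at `i` in
`[g, 2N - 1]`; then `c ∣ gcd A`, and it suffices that `gcd A` divides every elementary cycle
length `ℓ`. If the cycle passes through `i`, then `ℓ ∈ A`. Otherwise follow a simple path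
from `i` until it first meets the cycle, after `a ≥ 1` steps, and return to `i` along a simple
path of length `b < N`. The `a` nodes before the meeting point are distinct and off the cycle,
so `a + ℓ ≤ N`; hence `a + b` and `a + ℓ + b` both lie in `A`, and `gcd A` divides their
difference `ℓ`.
-/

def HasWalk (E : V → V → Prop) (i j : V) (n : ℕ) : Prop :=
  ∃ p, IsWalk E n p ∧ p 0 = i ∧ p n = j

section Walks

variable {E : V → V → Prop}

theorem HasWalk.trans {i j k : V} {m n : ℕ} (hij : HasWalk E i j m) (hjk : HasWalk E j k n) :
    HasWalk E i k (m + n) := by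
  classical
  obtain ⟨p, hp, hp0, hpm⟩ := hij
  obtain ⟨q, hq, hq0, hqn⟩ := hjk
  have hr : ∀ s, m ≤ s → (if s ≤ m then p s else q (s - m)) = q (s - m) := by
    intro s hs
    rcases hs.eq_or_lt with rfl | hlt
    · simp [hpm, hq0]
    · simp [Nat.not_le.mpr hlt]
  refine ⟨fun s => if s ≤ m then p s else q (s - m), fun s hs => ?_, by simp [hp0], ?_⟩
  · by_cases hsm : s + 1 ≤ m
    · simpa [hsm, Nat.le_of_succ_le hsm] using hp s hsm
    · beta_reduce
      rw [hr s (by omega), hr (s + 1) (by omega), show s + 1 - m = s - m + 1 by omega]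
      exact hq (s - m) (by omega)
  · beta_reduce
    rw [hr (m + n) (by omega), Nat.add_sub_cancel_left, hqn]

theorem IsWalk.hasWalk_prefix {n k : ℕ} {p : ℕ → V} (hp : IsWalk E n p) (hk : k ≤ n) :
    HasWalk E (p 0) (p k) k :=
  ⟨p, fun s hs => hp s (by omega), rfl, rfl⟩

theorem IsWalk.hasWalk_segment {n k l : ℕ} {p : ℕ → V} (hp : IsWalk E n p) (hkl : k ≤ l)
    (hln : l ≤ n) : HasWalk E (p k) (p l) (l - k) :=
  ⟨fun s => p (k + s), fun s hs => hp (k + s) (by omega), rfl,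
    congrArg p (Nat.add_sub_cancel' hkl)⟩

theorem IsClosedWalk.hasWalk_rotate {n k : ℕ} {p : ℕ → V} (hp : IsClosedWalk E n p)
    (hk : k ≤ n) : HasWalk E (p k) (p k) n := by
  have h := (hp.1.hasWalk_segment hk le_rfl).trans (hp.2 ▸ hp.1.hasWalk_prefix hk)
  rwa [Nat.sub_add_cancel hk] at h

theorem IsClosedWalk.hasWalk {n : ℕ} {p : ℕ → V} (hp : IsClosedWalk E n p) :
    HasWalk E (p 0) (p 0) n :=
  ⟨p, hp.1, rfl, hp.2.symm⟩

theorem closedLengthsAt_subset_closedLengths (i : V) :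
    ClosedLengthsAt E i ⊆ ClosedLengths E :=
  fun _ ⟨hn, p, hp, hp0, hpn⟩ => ⟨hn, p, hp, hp0.trans hpn.symm⟩

theorem exists_lt_and_eq_of_not_injOn {p : ℕ → V} {B : ℕ → Prop}
    (h : ¬ ∀ k l, B k → B l → p k = p l → k = l) : ∃ k l, k < l ∧ B l ∧ p k = p l := by
  push Not at h
  obtain ⟨k, l, hk, hl, heq, hne⟩ := h
  rcases hne.lt_or_gt with hlt | hlt
  · exact ⟨k, l, hlt, hl, heq⟩
  · exact ⟨l, k, hlt, hk, heq.symm⟩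

theorem IsSimpleWalk.of_le {m n : ℕ} {p : ℕ → V} (hp : IsSimpleWalk E n p) (hmn : m ≤ n) :
    IsSimpleWalk E m p :=
  ⟨fun k hk => hp.1 k (by omega), fun k l hk hl => hp.2 k l (by omega) (by omega)⟩

theorem HasWalk.exists_isSimpleWalk {i j : V} {n : ℕ} (h : HasWalk E i j n) :
    ∃ m ≤ n, ∃ q, IsSimpleWalk E m q ∧ q 0 = i ∧ q m = j := by
  induction n using Nat.strong_induction_on generalizing i j with
  | _ n ih =>
    obtain ⟨p, hp, rfl, rfl⟩ := h
    by_cases hinj : ∀ k l, k ≤ n → l ≤ n → p k = p l → k = l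
    · exact ⟨n, le_rfl, p, ⟨hp, hinj⟩, rfl, rfl⟩
    obtain ⟨k, l, hkl, hln, heq⟩ := exists_lt_and_eq_of_not_injOn hinj
    have hcut := (hp.hasWalk_prefix (hkl.trans_le hln).le).trans (heq ▸ hp.hasWalk_segment hln le_rfl)
    obtain ⟨m, hm, hq⟩ := ih _ (by omega) hcut
    exact ⟨m, by omega, hq⟩

theorem HasWalk.exists_isSimpleWalk_first_hit {i j : V} {n : ℕ} {S : V → Prop}
    (h : HasWalk E i j n) (hj : S j) :
    ∃ a q, IsSimpleWalk E a q ∧ q 0 = i ∧ S (q a) ∧ ∀ s < a, ¬ S (q s) := by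
  classical
  obtain ⟨m, -, q, hq, hq0, hqm⟩ := h.exists_isSimpleWalk
  have hex : ∃ s, S (q s) := ⟨m, hqm ▸ hj⟩
  exact ⟨Nat.find hex, q, hq.of_le (Nat.find_min' hex (hqm ▸ hj)), hq0, Nat.find_spec hex,
    fun s hs => Nat.find_min hex hs⟩

theorem HasWalk.length_induction {P : ℕ → Prop}
    (helem : ∀ n p, IsElemClosedWalk E n p → P n) (hadd : ∀ a b, P a → P b → P (a + b))
    {v : V} {n : ℕ} (hn : 0 < n) (h : HasWalk E v v n) : P n := by
  induction n using Nat.strong_induction_on generalizing v with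
  | _ n ih =>
    obtain ⟨p, hp, rfl, hpn⟩ := h
    have hcl : IsClosedWalk E n p := ⟨hp, hpn.symm⟩
    by_cases hinj : ∀ k l, k < n → l < n → p k = p l → k = l
    · exact helem n p ⟨hn, hcl, hinj⟩
    obtain ⟨k, l, hkl, hln, heq⟩ := exists_lt_and_eq_of_not_injOn hinj
    have hloop : HasWalk E (p l) (p l) (l - k) := heq ▸ hp.hasWalk_segment hkl.le hln.le
    have hrest : HasWalk E (p 0) (p 0) (k + (n - l)) :=
      hcl.2 ▸ (hp.hasWalk_prefix (hkl.trans hln).le).trans (heq ▸ hp.hasWalk_segment hln.le le_rfl)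
    have h := hadd _ _ (ih _ (by omega) (by omega) hloop) (ih _ (by omega) (by omega) hrest)
    rwa [show l - k + (k + (n - l)) = n by omega] at h

theorem IsGirth.pos {g : ℕ} (hg : IsGirth E g) : 0 < g :=
  hg.1.elim fun _ hp => hp.1

theorem IsGirth.le_of_hasWalk {g n : ℕ} {v : V} (hg : IsGirth E g) (hn : 0 < n)
    (h : HasWalk E v v n) : g ≤ n :=
  h.length_induction (P := (g ≤ ·)) (fun _ p hp => hg.2 ⟨p, hp⟩)
    (fun a b ha _ => ha.trans (Nat.le_add_right a b)) hn

end Walks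

section Counting

variable [Fintype V] {E : V → V → Prop}

theorem le_card_of_injOn {n : ℕ} {p : ℕ → V} (hp : Set.InjOn p (Set.Iio n)) :
    n ≤ Fintype.card V := by
  simpa using Finset.card_le_card_of_injOn p (s := Finset.range n) (t := Finset.univ) (fun _ _ => Finset.mem_univ _)
    (by simpa using hp)

theorem add_le_card_of_injOn_of_disjoint {a b : ℕ} {p q : ℕ → V}
    (hp : Set.InjOn p (Set.Iio a)) (hq : Set.InjOn q (Set.Iio b))
    (hpq : ∀ s < a, ∀ t < b, p s ≠ q t) : a + b ≤ Fintype.card V := by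
  classical
  have hdisj : Disjoint ((Finset.range a).image p) ((Finset.range b).image q) := by
    simp only [Finset.disjoint_left, Finset.mem_image, Finset.mem_range]
    rintro _ ⟨s, hs, rfl⟩ ⟨t, ht, heq⟩
    exact hpq s hs t ht heq.symm
  have h := Finset.card_le_univ ((Finset.range a).image p ∪ (Finset.range b).image q)
  rwa [Finset.card_union_of_disjoint hdisj, Finset.card_image_of_injOn (by simpa using hp),
    Finset.card_image_of_injOn (by simpa using hq), Finset.card_range, Finset.card_range] at h

theorem IsSimpleWalk.length_lt_card {n : ℕ} {p : ℕ → V} (hp : IsSimpleWalk E n p) :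
    n < Fintype.card V :=
  le_card_of_injOn (n := n + 1) fun k hk l hl => hp.2 k l (Nat.lt_succ_iff.1 hk)
    (Nat.lt_succ_iff.1 hl)

theorem IsElemClosedWalk.length_le_card {n : ℕ} {p : ℕ → V} (hp : IsElemClosedWalk E n p) :
    n ≤ Fintype.card V :=
  le_card_of_injOn fun k hk l hl => hp.2.2 k l hk hl

theorem HasWalk.exists_length_lt_card {i j : V} {n : ℕ} (h : HasWalk E i j n) :
    ∃ m < Fintype.card V, HasWalk E i j m := by
  obtain ⟨m, -, q, hq, hq0, hqm⟩ := h.exists_isSimpleWalk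
  exact ⟨m, hq.length_lt_card, q, hq.1, hq0, hqm⟩

theorem StronglyConnected.exists_detour (hsc : StronglyConnected E) {ℓ : ℕ} {z : ℕ → V}
    (hz : IsElemClosedWalk E ℓ z) {i : V} (hi : ∀ k < ℓ, z k ≠ i) :
    ∃ m, 0 < m ∧ m + ℓ ≤ 2 * Fintype.card V - 1 ∧ HasWalk E i i m ∧ HasWalk E i i (m + ℓ) := by
  obtain ⟨n, hn⟩ : ∃ n, HasWalk E i (z 0) n := hsc i (z 0)
  obtain ⟨a, q, hq, hq0, ⟨k, hk, hzk⟩, hfirst⟩ :=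
    hn.exists_isSimpleWalk_first_hit (S := fun v => ∃ k < ℓ, z k = v) ⟨0, hz.1, rfl⟩
  have ha : 0 < a := Nat.pos_of_ne_zero fun ha0 => by
    subst ha0
    exact hi k hk (hzk.trans hq0)
  have hcard : a + ℓ ≤ Fintype.card V :=
    add_le_card_of_injOn_of_disjoint (fun s hs t ht => hq.2 s t (le_of_lt hs) (le_of_lt ht))
      (fun s hs t ht => hz.2.2 s t hs ht) fun s hs t ht heq => hfirst s hs ⟨t, ht, heq.symm⟩
  obtain ⟨b', hb'⟩ : ∃ n, HasWalk E (q a) i n := hsc (q a) i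
  obtain ⟨b, hb, hback⟩ := hb'.exists_length_lt_card
  have hto : HasWalk E i (q a) a := hq0 ▸ hq.1.hasWalk_prefix le_rfl
  have hcycle : HasWalk E (q a) (q a) ℓ := hzk ▸ hz.2.1.hasWalk_rotate hk.le
  refine ⟨a + b, by omega, by omega, hto.trans hback, ?_⟩
  have h := (hto.trans hcycle).trans hback
  rwa [show a + ℓ + b = a + b + ℓ by omega] at h

end Counting

theorem stmt_6_general {V : Type*} [Fintype V] (E : V → V → Prop)
    (hsc : StronglyConnected E)
    (c g : ℕ) (hc : IsGcdOf c (ClosedLengths E)) (hg : IsGirth E g) (i : V) :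
    ∃ A : Finset ℕ, (↑A : Set ℕ) ⊆ ClosedLengthsAt E i ∧ A.gcd id = c ∧
      (∀ n p, IsElemClosedWalk E n p → p 0 = i → n ∈ A) ∧
      ∀ n ∈ A, g ≤ n ∧ n ≤ 2 * Fintype.card V - 1 := by
  classical
  set A := (Finset.Icc g (2 * Fintype.card V - 1)).filter (HasWalk E i i)
  have mem_A {n : ℕ} (h : HasWalk E i i n) (hn : 0 < n) (hle : n ≤ 2 * Fintype.card V - 1) :
      n ∈ A :=
    Finset.mem_filter.2 ⟨Finset.mem_Icc.2 ⟨hg.le_of_hasWalk hn h, hle⟩, h⟩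
  have mem_A_of_cycle {ℓ k : ℕ} {z : ℕ → V} (hz : IsElemClosedWalk E ℓ z) (hk : k ≤ ℓ)
      (hzk : z k = i) : ℓ ∈ A :=
    mem_A (hzk ▸ hz.2.1.hasWalk_rotate hk) hz.1 (by have := hz.length_le_card; omega)
  have hA : (↑A : Set ℕ) ⊆ ClosedLengthsAt E i := fun n hn =>
    have hn := Finset.mem_filter.1 hn
    ⟨hg.pos.trans_le (Finset.mem_Icc.1 hn.1).1, hn.2⟩
  have dvd_cycle (ℓ : ℕ) (z : ℕ → V) (hz : IsElemClosedWalk E ℓ z) : A.gcd id ∣ ℓ := by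
    by_cases hi : ∃ k < ℓ, z k = i
    · obtain ⟨k, hk, hzk⟩ := hi
      exact Finset.gcd_dvd (mem_A_of_cycle hz hk.le hzk)
    push Not at hi
    obtain ⟨m, hm, hmℓ, hwm, hwmℓ⟩ := hsc.exists_detour hz hi
    have hmA : m ∈ A := mem_A hwm hm (by omega)
    have hmℓA : m + ℓ ∈ A := mem_A hwmℓ (by omega) hmℓ
    exact (Nat.dvd_add_right (Finset.gcd_dvd hmA)).1 (Finset.gcd_dvd hmℓA)
  refine ⟨A, hA, Nat.dvd_antisymm ?_ ?_, fun n p hp hp0 => mem_A_of_cycle hp (Nat.zero_le n) hp0,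
    fun n hn => Finset.mem_Icc.1 (Finset.mem_filter.1 hn).1⟩
  · exact hc.2 _ fun s ⟨hs, p, hp⟩ =>
      hp.hasWalk.length_induction dvd_cycle (fun _ _ => dvd_add) hs
  · exact Finset.dvd_gcd fun n hn => hc.1 n (closedLengthsAt_subset_closedLengths i (hA hn))

/-- In a nontrivial strongly connected graph with `N` nodes, girth `g`
and cyclicity `c`, every node `i` admits a finite set `A` of lengths of nonempty
closed paths starting at `i` with `gcd A = c`, containing the length of every
elementary closed path starting at `i`, and with all elements in `[g, 2N−1]`. -/
theorem stmt_6 {V : Type*} [Fintype V] (E : V → V → Prop)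
    (hnt : NontrivialGraph E) (hsc : StronglyConnected E)
    (c g : ℕ) (hc : IsGcdOf c (ClosedLengths E)) (hg : IsGirth E g) (i : V) :
    ∃ A : Finset ℕ, (↑A : Set ℕ) ⊆ ClosedLengthsAt E i ∧ A.gcd id = c ∧
      (∀ n p, IsElemClosedWalk E n p → p 0 = i → n ∈ A) ∧
      ∀ n ∈ A, g ≤ n ∧ n ≤ 2 * Fintype.card V - 1 :=
  stmt_6_general E hsc c g hc hg i

end Transients
end

section
/- Let G be a directed graph, let d be a positive integer, let π be a path in G, and let k be a node of π. Then there exists a path π̂ in G with the same start node and the same end node as π such that k is a node of π̂, ℓ(π̂) ≡ ℓ(π) (mod d), and ℓ(π̂) ≤ (d−1)·cr(G) + (d+1)·cd(G). Moreover, if G is edge-weighted and every nonempty closed path of G has nonpositive weight, then π̂ can additionally be chosen with w_*(π̂) ≥ w_*(π). -/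
/-!
A walk longer than `(d - 1)·cr + (d + 1)·cd` can be cut, away from the position `t` of `k`,
into at least `d` disjoint windows of `cd + 1` steps. A window cannot be a simple walk, so
each contains a nonempty closed subwalk; this also forces `cr ≥ 1`, which is where the
`(d - 1)·cr` term pays for the rounding in the window count. By pigeonhole on the prefix
sums of the lengths of these `d` closed subwalks modulo `d`, a consecutive block of them
has total length divisible by `d`. Deleting that block keeps the endpoints and `k`, keeps
the length modulo `d`, and cannot decrease the weight when every closed walk has
nonpositive weight; iterate until the bound holds. The unweighted claim is the case of
zero weights.
-/

namespace Transients

variable {V : Type*}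

section Walks

variable {E : V → V → Prop} {w : V → V → ℝ}

theorem isWalk_add_iff {m n : ℕ} {p : ℕ → V} :
    IsWalk E (m + n) p ↔ IsWalk E m p ∧ IsWalk E n (fun z => p (m + z)) := by
  refine ⟨fun h => ⟨fun k hk => h k (by omega), fun k hk => h (m + k) (by omega)⟩,
    fun ⟨h₁, h₂⟩ k hk => ?_⟩
  by_cases hkm : k < m
  · exact h₁ k hkm
  · obtain ⟨j, rfl⟩ := Nat.exists_eq_add_of_le (not_lt.mp hkm)
    exact h₂ j (by omega)

theorem walkWeight_add (m n : ℕ) (p : ℕ → V) :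
    walkWeight w (m + n) p = walkWeight w m p + walkWeight w n (fun z => p (m + z)) :=
  Finset.sum_range_add _ m n

theorem IsWalk.congr {n : ℕ} {p q : ℕ → V} (hp : IsWalk E n p) (h : ∀ z ≤ n, p z = q z) :
    IsWalk E n q := fun k hk => h k hk.le ▸ h (k + 1) hk ▸ hp k hk

theorem walkWeight_congr {n : ℕ} {p q : ℕ → V} (h : ∀ z ≤ n, p z = q z) :
    walkWeight w n p = walkWeight w n q :=
  Finset.sum_congr rfl fun k hk => by
    rw [h k (Finset.mem_range.mp hk).le, h (k + 1) (Finset.mem_range.mp hk)]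

def cutOut (p : ℕ → V) (x c : ℕ) : ℕ → V := fun z => if z < x then p z else p (z + c)

theorem cutOut_of_le {p : ℕ → V} {x c z : ℕ} (hcyc : p x = p (x + c)) (hz : z ≤ x) :
    cutOut p x c z = p z := by
  unfold cutOut
  split_ifs with h
  · rfl
  · rw [show z = x by omega, hcyc]

theorem cutOut_add (p : ℕ → V) (x c z : ℕ) : cutOut p x c (x + z) = p (x + c + z) := by
  simp only [cutOut, show ¬ x + z < x by omega, if_false, Nat.add_right_comm]

theorem IsWalk.cutOut {x c u : ℕ} {p : ℕ → V} (hp : IsWalk E (x + c + u) p)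
    (hcyc : p x = p (x + c)) : IsWalk E (x + u) (cutOut p x c) := by
  rw [isWalk_add_iff] at hp ⊢
  rw [isWalk_add_iff] at hp
  refine ⟨hp.1.1.congr fun z hz => (cutOut_of_le hcyc hz).symm, ?_⟩
  simpa only [cutOut_add] using hp.2

theorem walkWeight_cutOut {x c u : ℕ} {p : ℕ → V} (hcyc : p x = p (x + c)) :
    walkWeight w (x + c + u) p
      = walkWeight w (x + u) (cutOut p x c) + walkWeight w c (fun z => p (x + z)) := by
  rw [walkWeight_add, walkWeight_add x c, walkWeight_add x u,
    walkWeight_congr fun z hz => cutOut_of_le hcyc hz]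
  simp only [cutOut_add]
  ring

theorem IsWalk.exists_isElemClosedWalk {n x y : ℕ} {p : ℕ → V}
    (hp : IsWalk E n p) (hxy : x < y) (hyn : y ≤ n) (hrep : p x = p y) :
    ∃ c q, IsElemClosedWalk E c q := by
  classical
  have hex : ∃ c, 0 < c ∧ ∃ z, z + c ≤ n ∧ p z = p (z + c) :=
    ⟨y - x, by omega, x, by omega, by rwa [Nat.add_sub_cancel' hxy.le]⟩
  obtain ⟨hpos, z, hzn, hz⟩ := Nat.find_spec hex
  refine ⟨Nat.find hex, fun k => p (z + k), hpos, ⟨fun k hk => hp (z + k) (by omega), hz⟩,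
    fun k l hk hl hkl => ?_⟩
  -- a repetition inside the closed subwalk would be a shorter one
  by_contra hne
  wlog hlt : k < l generalizing k l
  · exact this l k hl hk hkl.symm (Ne.symm hne) (by omega)
  refine Nat.find_min hex (m := l - k) (by omega) ⟨by omega, z + k, by omega, ?_⟩
  rwa [show z + k + (l - k) = z + l by omega]

end Walks

section Finite

variable [Finite V] {E : V → V → Prop}

theorem IsSimpleWalk.length_le_cabDiameter {n : ℕ} {p : ℕ → V} (h : IsSimpleWalk E n p) :
    n ≤ cabDiameter E := by
  refine le_csSup ⟨Nat.card V, fun m ⟨q, hq⟩ => ?_⟩ ⟨p, h⟩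
  have hinj : Function.Injective fun i : Fin (m + 1) => q i := fun i j hij =>
    Fin.ext (hq.2 i j (Nat.lt_succ_iff.mp i.isLt) (Nat.lt_succ_iff.mp j.isLt) hij)
  have := Nat.card_le_card_of_injective _ hinj
  simp only [Nat.card_eq_fintype_card, Fintype.card_fin] at this
  omega

theorem IsElemClosedWalk.length_le_circumference {n : ℕ} {p : ℕ → V}
    (h : IsElemClosedWalk E n p) : n ≤ circumference E := by
  refine le_csSup ⟨Nat.card V, fun m ⟨q, hq⟩ => ?_⟩ ⟨p, h⟩
  have hinj : Function.Injective fun i : Fin m => q i := fun i j hij =>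
    Fin.ext (hq.2.2 i j i.isLt j.isLt hij)
  simpa using Nat.card_le_card_of_injective _ hinj

theorem IsWalk.exists_repeat {n e : ℕ} {p : ℕ → V} (hp : IsWalk E n p)
    (he : e + (cabDiameter E + 1) ≤ n) :
    ∃ x y, e ≤ x ∧ x < y ∧ y ≤ e + (cabDiameter E + 1) ∧ p x = p y := by
  by_contra! hcon
  have hsimple : IsSimpleWalk E (cabDiameter E + 1) (fun z => p (e + z)) := by
    refine ⟨fun k hk => hp (e + k) (by omega), fun k l hk hl hkl => ?_⟩
    by_contra hne
    rcases Nat.lt_or_gt_of_ne hne with h | h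
    · exact hcon (e + k) (e + l) (by omega) (by omega) (by omega) hkl
    · exact hcon (e + l) (e + k) (by omega) (by omega) (by omega) hkl.symm
  have := hsimple.length_le_cabDiameter
  omega

end Finite

theorem exists_Ico_dvd_sum (c : ℕ → ℕ) {d : ℕ} (hd : 0 < d) :
    ∃ a b, a < b ∧ b ≤ d ∧ d ∣ ∑ i ∈ Finset.Ico a b, c i := by
  obtain ⟨i, hi, j, hj, hne, hmod⟩ := Finset.exists_ne_map_eq_of_card_lt_of_maps_to
    (s := Finset.range (d + 1)) (t := Finset.range d)
    (f := fun k => (∑ i ∈ Finset.range k, c i) % d) (by simp)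
    (fun k _ => Finset.mem_range.mpr (Nat.mod_lt _ hd))
  wlog hij : i < j generalizing i j
  · exact this j hj i hi hne.symm hmod.symm (by omega)
  refine ⟨i, j, hij, Nat.lt_succ_iff.mp (Finset.mem_range.mp hj), ?_⟩
  have hsplit := Finset.sum_range_add_sum_Ico c hij.le
  have hdvd := (Nat.modEq_iff_dvd' (Finset.sum_le_sum_of_subset
    (Finset.range_subset_range.mpr hij.le))).mp hmod
  rwa [← hsplit, Nat.add_sub_cancel_left] at hdvd

theorem exists_disjoint_windows (W : ℕ) {t n : ℕ} (ht : t ≤ n) :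
    ∃ lo : ℕ → ℕ, (∀ i < t / W + (n - t) / W, lo i + W ≤ n ∧ (t ≤ lo i ∨ lo i + W ≤ t)) ∧
      ∀ i j, i < j → lo i + W ≤ lo j := by
  set a := t / W
  have ha : W * a ≤ t := Nat.mul_div_le t W
  have hb : W * ((n - t) / W) ≤ n - t := Nat.mul_div_le (n - t) W
  refine ⟨fun i => if i < a then W * i else t + W * (i - a), fun i hi => ?_,
    fun i j hij => ?_⟩ <;> dsimp only
  · split_ifs with hia
    · have : W * (i + 1) ≤ W * a := Nat.mul_le_mul_left W hia
      rw [Nat.mul_succ] at this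
      omega
    · have : W * (i - a + 1) ≤ W * ((n - t) / W) := Nat.mul_le_mul_left W (by omega)
      rw [Nat.mul_succ] at this
      omega
  · split_ifs with hia hja hja
    · have : W * (i + 1) ≤ W * j := Nat.mul_le_mul_left W hij
      rwa [Nat.mul_succ] at this
    · have : W * (i + 1) ≤ W * a := Nat.mul_le_mul_left W hia
      rw [Nat.mul_succ] at this
      omega
    · omega
    · have : W * (i - a + 1) ≤ W * (j - a) := Nat.mul_le_mul_left W (by omega)
      rw [Nat.mul_succ] at this
      omega

theorem IsWalk.exists_disjoint_cycles [Finite V] {E : V → V → Prop} {n t r : ℕ} {p : ℕ → V}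
    (hp : IsWalk E n p) (ht : t ≤ n)
    (hr : r ≤ t / (cabDiameter E + 1) + (n - t) / (cabDiameter E + 1)) :
    ∃ X C : ℕ → ℕ,
      (∀ i < r, 0 < C i ∧ p (X i) = p (X i + C i) ∧ X i + C i ≤ n ∧ (t ≤ X i ∨ X i + C i ≤ t)) ∧
      ∀ i j, i < j → j < r → X i + C i ≤ X j := by
  obtain ⟨lo, hlo, hord⟩ := exists_disjoint_windows (cabDiameter E + 1) ht
  have hrep : ∀ i, ∃ x y, i < r →
      lo i ≤ x ∧ x < y ∧ y ≤ lo i + (cabDiameter E + 1) ∧ p x = p y := by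
    intro i
    by_cases hi : i < r
    · obtain ⟨x, y, h⟩ := hp.exists_repeat (hlo i (by omega)).1
      exact ⟨x, y, fun _ => h⟩
    · exact ⟨0, 0, fun h => absurd h hi⟩
  choose X Y hXY using hrep
  refine ⟨X, fun i => Y i - X i, fun i hi => ?_, fun i j hij hj => ?_⟩ <;> dsimp only
  · obtain ⟨h₁, h₂, h₃, h₄⟩ := hXY i hi
    have := hlo i (by omega)
    refine ⟨by omega, by rwa [Nat.add_sub_cancel' h₂.le], by omega, by omega⟩
  · have := hord i j hij
    have := hXY i (by omega)
    have := hXY j hj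
    omega

theorem le_div_add_div_of_lt {d c D t n : ℕ} (hc : 1 ≤ c) (ht : t ≤ n)
    (hn : (d - 1) * c + (d + 1) * D < n) : d ≤ t / (D + 1) + (n - t) / (D + 1) := by
  by_contra! hlt
  have hdiv₁ := Nat.div_add_mod t (D + 1)
  have hdiv₂ := Nat.div_add_mod (n - t) (D + 1)
  have hmod₁ := Nat.mod_lt (y := D + 1) t (by omega)
  have hmod₂ := Nat.mod_lt (y := D + 1) (n - t) (by omega)
  have hmul : (D + 1) * (t / (D + 1)) + (D + 1) * ((n - t) / (D + 1)) + (D + 1)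
      ≤ (D + 1) * d := by
    rw [← Nat.mul_add, ← Nat.mul_succ]
    exact Nat.mul_le_mul_left _ hlt
  have hc' : d - 1 ≤ (d - 1) * c := Nat.le_mul_of_pos_right _ hc
  have hexpand : (d + 1) * D + d = (D + 1) * d + D := by ring
  omega

section Reduct

variable {E : V → V → Prop} {w : V → V → ℝ}

structure Reduct (E : V → V → Prop) (w : V → V → ℝ) (n : ℕ) (p : ℕ → V) (t m : ℕ)
    (q : ℕ → V) (s : ℕ) : Prop where
  isWalk : IsWalk E m q
  start : q 0 = p 0
  finish : q m = p n
  mark_le : s ≤ m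
  mark : q s = p t
  weight_le : walkWeight w n p ≤ walkWeight w m q

theorem Reduct.refl {n t : ℕ} {p : ℕ → V} (hp : IsWalk E n p) (ht : t ≤ n) :
    Reduct E w n p t n p t :=
  ⟨hp, rfl, rfl, ht, rfl, le_rfl⟩

theorem Reduct.trans {n t m s k r : ℕ} {p q u : ℕ → V} (h₁ : Reduct E w n p t m q s)
    (h₂ : Reduct E w m q s k u r) : Reduct E w n p t k u r :=
  ⟨h₂.isWalk, h₂.start.trans h₁.start, h₂.finish.trans h₁.finish, h₂.mark_le,
    h₂.mark.trans h₁.mark, h₁.weight_le.trans h₂.weight_le⟩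

variable (hw : ∀ n p, 0 < n → IsClosedWalk E n p → walkWeight w n p ≤ 0)
include hw

theorem reduct_cutOut {x c u t : ℕ} {p : ℕ → V} (hp : IsWalk E (x + c + u) p)
    (hcyc : p x = p (x + c)) (ht : t ≤ x ∨ x + c ≤ t) (htn : t ≤ x + c + u) :
    Reduct E w (x + c + u) p t (x + u) (cutOut p x c) (if t ≤ x then t else t - c) := by
  refine ⟨hp.cutOut hcyc, cutOut_of_le hcyc (Nat.zero_le x), ?_, ?_, ?_, ?_⟩
  · rw [cutOut_add, Nat.add_right_comm]
  · split_ifs <;> omega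
  · split_ifs with h
    · exact cutOut_of_le hcyc h
    · obtain ⟨j, rfl⟩ : ∃ j, t = x + c + j := Nat.exists_eq_add_of_le (by omega)
      rw [show x + c + j - c = x + j by omega, cutOut_add]
  · have hcycle : walkWeight w c (fun z => p (x + z)) ≤ 0 := by
      rcases Nat.eq_zero_or_pos c with rfl | hc
      · simp [walkWeight]
      · exact hw _ _ hc ⟨(isWalk_add_iff.mp (isWalk_add_iff.mp hp).1).2, hcyc⟩
    linarith [walkWeight_cutOut (w := w) (u := u) hcyc]

theorem exists_reduct_cutOut_cycles (S : Finset ℕ) (X C : ℕ → ℕ) :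
    ∀ {n t : ℕ} {p : ℕ → V}, IsWalk E n p → t ≤ n →
      (∀ i ∈ S, p (X i) = p (X i + C i) ∧ X i + C i ≤ n ∧ (t ≤ X i ∨ X i + C i ≤ t)) →
      (∀ i ∈ S, ∀ j ∈ S, i < j → X i + C i ≤ X j) →
      ∃ m q s, m + ∑ i ∈ S, C i = n ∧ Reduct E w n p t m q s := by
  induction S using Finset.induction_on_max with
  | empty => exact fun hp ht _ _ => ⟨_, _, _, by simp, Reduct.refl hp ht⟩
  | insert j S hlt ih =>
    intro n t p hp ht hcyc hord
    obtain ⟨hcycj, hjn, htj⟩ := hcyc j (Finset.mem_insert_self j S)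
    obtain ⟨u, rfl⟩ := Nat.exists_eq_add_of_le hjn
    have hleft : ∀ i ∈ S, X i + C i ≤ X j := fun i hi =>
      hord i (Finset.mem_insert_of_mem hi) j (Finset.mem_insert_self j S) (hlt i hi)
    obtain ⟨m, q, s, hm, hred⟩ := ih (t := if t ≤ X j then t else t - C j) (hp.cutOut hcycj)
      (by split_ifs <;> omega)
      (fun i hi => by
        obtain ⟨hcyci, -, hti⟩ := hcyc i (Finset.mem_insert_of_mem hi)
        have := hleft i hi
        refine ⟨?_, by omega, by split_ifs <;> omega⟩
        rwa [cutOut_of_le hcycj (by omega), cutOut_of_le hcycj this])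
      (fun i hi k hk => hord i (Finset.mem_insert_of_mem hi) k (Finset.mem_insert_of_mem hk))
    refine ⟨m, q, s, ?_, (reduct_cutOut hw hp hcycj htj ht).trans hred⟩
    rw [Finset.sum_insert fun hj => lt_irrefl j (hlt j hj)]
    omega

theorem exists_reduct_modEq_le [Finite V] {d : ℕ} (hd : 0 < d) {n t : ℕ} {p : ℕ → V}
    (hp : IsWalk E n p) (ht : t ≤ n) :
    ∃ m q s, Reduct E w n p t m q s ∧ m ≡ n [MOD d] ∧
      m ≤ (d - 1) * circumference E + (d + 1) * cabDiameter E := by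
  induction n using Nat.strong_induction_on generalizing t p with
  | _ n ih =>
  by_cases hn : n ≤ (d - 1) * circumference E + (d + 1) * cabDiameter E
  · exact ⟨n, p, t, .refl hp ht, rfl, hn⟩
  rw [not_le] at hn
  have hcr : 1 ≤ circumference E := by
    have : cabDiameter E ≤ (d + 1) * cabDiameter E := Nat.le_mul_of_pos_left _ (by omega)
    obtain ⟨x, y, -, hxy, hy, hrep⟩ := hp.exists_repeat (e := 0) (by omega)
    obtain ⟨c, q, hq⟩ := hp.exists_isElemClosedWalk hxy (by omega) hrep
    exact hq.1.trans_le hq.length_le_circumference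
  obtain ⟨X, C, hcyc, hord⟩ := hp.exists_disjoint_cycles ht (le_div_add_div_of_lt hcr ht hn)
  obtain ⟨a, b, hab, hbd, hdvd⟩ := exists_Ico_dvd_sum C hd
  obtain ⟨m, q, s, hm, hred⟩ := exists_reduct_cutOut_cycles hw (Finset.Ico a b) X C hp ht
    (fun i hi => (hcyc i (by rw [Finset.mem_Ico] at hi; omega)).2)
    (fun i _ j hj hij => hord i j hij (by rw [Finset.mem_Ico] at hj; omega))
  have hpos : 0 < ∑ i ∈ Finset.Ico a b, C i :=
    (hcyc a (by omega)).1.trans_le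
      (Finset.single_le_sum (fun _ _ => Nat.zero_le _) (Finset.left_mem_Ico.mpr hab))
  obtain ⟨m', q', s', hred', hmod, hle⟩ := ih m (by omega) hred.isWalk hred.mark_le
  refine ⟨m', q', s', hred.trans hred', hmod.trans ?_, hle⟩
  rw [← hm]
  exact (Nat.modEq_iff_dvd' (Nat.le_add_right _ _)).mpr (by rwa [Nat.add_sub_cancel_left])

end Reduct

/-- (Path reduction.) Given a path `p` of length `n` through a node
`k` and a positive modulus `d`, there is a path `q` with the same endpoints, through
`k`, with length congruent to `n` mod `d` and at most `(d−1)·cr(G) + (d+1)·cd(G)`;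
if moreover every nonempty closed path has nonpositive weight, `q` can additionally
be chosen with weight at least that of `p`. -/
theorem stmt_10 {V : Type*} [Fintype V] (E : V → V → Prop) (wE : V → V → ℝ)
    (d : ℕ) (hd : 0 < d)
    (n : ℕ) (p : ℕ → V) (hp : IsWalk E n p) (k : V) (t : ℕ) (ht : t ≤ n) (hk : p t = k) :
    (∃ m q, IsWalk E m q ∧ q 0 = p 0 ∧ q m = p n ∧ (∃ s, s ≤ m ∧ q s = k) ∧
      m ≡ n [MOD d] ∧ m ≤ (d - 1) * circumference E + (d + 1) * cabDiameter E) ∧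
    ((∀ nn pp, 0 < nn → IsClosedWalk E nn pp → walkWeight wE nn pp ≤ 0) →
      ∃ m q, IsWalk E m q ∧ q 0 = p 0 ∧ q m = p n ∧ (∃ s, s ≤ m ∧ q s = k) ∧
        m ≡ n [MOD d] ∧ m ≤ (d - 1) * circumference E + (d + 1) * cabDiameter E ∧
        walkWeight wE n p ≤ walkWeight wE m q) := by
  subst hk
  constructor
  · obtain ⟨m, q, s, h, hmod, hle⟩ :=
      exists_reduct_modEq_le (w := 0) (fun _ _ _ _ => by simp [walkWeight]) hd hp ht
    exact ⟨m, q, h.isWalk, h.start, h.finish, ⟨s, h.mark_le, h.mark⟩, hmod, hle⟩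
  · intro hw
    obtain ⟨m, q, s, h, hmod, hle⟩ := exists_reduct_modEq_le hw hd hp ht
    exact ⟨m, q, h.isWalk, h.start, h.finish, ⟨s, h.mark_le, h.mark⟩, hmod, hle, h.weight_le⟩

end Transients
end
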